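/- For every real number a with 0 < a ≤ 1, one has ∫₀¹ r·log(1/r)/(r + a)² dr ≤ 1 + log(1/a) + (1/2)·log²(1/a). -/

import Mathlib

/-!
Split the integral at `r = a`. On `[0, a]` use `(r + a)² ≥ a²`, and on `[a, 1]` use
`(r + a)² ≥ r²`; the resulting integrals are elementary and equal `1/4 + log(1/a)/2` and
`log²(1/a)/2` respectively.
-/

open MeasureTheory Set intervalIntegral Real

theorem integral_mul_log (a : ℝ) : ∫ x in 0..a, x * log x = a ^ 2 / 2 * log a - a ^ 2 / 4 := by
  have hderiv : ∀ x ≠ 0, HasDerivAt (fun x => x * (x * log x) / 2 - x ^ 2 / 4) (x * log x) x :=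
    fun x hx => ((((hasDerivAt_id' x).mul (hasDerivAt_mul_log hx)).div_const 2).sub
      ((hasDerivAt_pow 2 x).div_const 4)).congr_deriv (by ring)
  have hcont : Continuous fun x => x * (x * log x) / 2 - x ^ 2 / 4 := by
    fun_prop (disch := exact continuous_mul_log)
  have hne : ∀ x ∈ Ioo (min 0 a) (max 0 a), x ≠ 0 := fun x hx =>
    ne_of_mem_of_not_mem hx (by simp +contextual [le_of_lt])
  rw [integral_eq_sub_of_hasDeriv_right hcont.continuousOn
    (fun x hx => (hderiv x (hne x hx)).hasDerivWithinAt)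
    (continuous_mul_log.intervalIntegrable 0 a)]
  ring

theorem integral_log_div_self {a b : ℝ} (ha : 0 < a) (hb : 0 < b) :
    ∫ x in a..b, log x / x = log b ^ 2 / 2 - log a ^ 2 / 2 := by
  have hne : ∀ x ∈ uIcc a b, x ≠ 0 := fun x hx => (lt_of_lt_of_le (lt_min ha hb) hx.1).ne'
  have hint : IntervalIntegrable (fun x => log x / x) volume a b :=
    ((continuousOn_log.mono hne).div continuousOn_id hne).intervalIntegrable
  refine integral_eq_sub_of_hasDerivAt (f := fun x => log x ^ 2 / 2) (fun x hx => ?_) hint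
  exact (((hasDerivAt_log (hne x hx)).pow 2).div_const 2).congr_deriv (by field_simp; ring)

theorem continuous_mul_log_one_div : Continuous fun r : ℝ => r * log (1 / r) :=
  continuous_mul_log.neg.congr fun r => by simp

theorem mul_log_one_div_nonneg {r : ℝ} (hr₀ : 0 ≤ r) (hr₁ : r ≤ 1) :
    0 ≤ r * log (1 / r) := by
  simpa using mul_log_nonpos hr₀ hr₁

theorem intervalIntegrable_mul_log_one_div_div_sq {a b c : ℝ} (ha : 0 < a) (hb : 0 ≤ b)
    (hc : 0 ≤ c) : IntervalIntegrable (fun r => r * log (1 / r) / (r + a) ^ 2) volume b c :=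
  ContinuousOn.intervalIntegrable <| continuous_mul_log_one_div.continuousOn.div
    (by fun_prop) fun r hr => by
      have : 0 ≤ r := le_trans (le_min hb hc) hr.1
      positivity

theorem integral_zero_to_self_mul_log_div_sq_le {a : ℝ} (ha₀ : 0 < a) (ha₁ : a ≤ 1) :
    ∫ r in 0..a, r * log (1 / r) / (r + a) ^ 2 ≤ 1 / 4 + log (1 / a) / 2 :=
  calc ∫ r in 0..a, r * log (1 / r) / (r + a) ^ 2
      ≤ ∫ r in 0..a, r * log (1 / r) / a ^ 2 := by
        refine integral_mono_on ha₀.le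
          (intervalIntegrable_mul_log_one_div_div_sq ha₀ le_rfl ha₀.le)
          ((continuous_mul_log_one_div.div_const _).intervalIntegrable 0 a) fun r hr => ?_
        gcongr
        · exact mul_log_one_div_nonneg hr.1 (hr.2.trans ha₁)
        · linarith [hr.1]
    _ = 1 / 4 + log (1 / a) / 2 := by
        simp only [one_div, log_inv, mul_neg, intervalIntegral.integral_div,
          intervalIntegral.integral_neg, integral_mul_log]
        field_simp
        ring

theorem integral_self_to_one_mul_log_div_sq_le {a : ℝ} (ha₀ : 0 < a) (ha₁ : a ≤ 1) :
    ∫ r in a..1, r * log (1 / r) / (r + a) ^ 2 ≤ log (1 / a) ^ 2 / 2 := by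
  have hne : ∀ x ∈ uIcc a 1, x ≠ 0 := fun x hx =>
    (ha₀.trans_le (by simpa [ha₁] using hx.1)).ne'
  calc ∫ r in a..1, r * log (1 / r) / (r + a) ^ 2
      ≤ ∫ r in a..1, -(log r / r) := by
        refine integral_mono_on ha₁
          (intervalIntegrable_mul_log_one_div_div_sq ha₀ ha₀.le zero_le_one)
          ((continuousOn_log.mono hne).div continuousOn_id hne).neg.intervalIntegrable
          fun r hr => ?_
        have hr₀ : 0 < r := ha₀.trans_le hr.1
        calc r * log (1 / r) / (r + a) ^ 2 ≤ r * log (1 / r) / r ^ 2 := by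
              gcongr
              · exact mul_log_one_div_nonneg hr₀.le hr.2
              · linarith
          _ = -(log r / r) := by field_simp; simp
    _ = log (1 / a) ^ 2 / 2 := by
        rw [intervalIntegral.integral_neg, integral_log_div_self ha₀ one_pos]
        simp

theorem integral_mul_log_div_sq_le (a : ℝ) (ha0 : 0 < a) (ha1 : a ≤ 1) :
    ∫ r in Set.Ioo (0 : ℝ) 1, r * Real.log (1 / r) / (r + a) ^ 2 ≤
      1 + Real.log (1 / a) + (1 / 2) * (Real.log (1 / a)) ^ 2 := by
  rw [← integral_Ioc_eq_integral_Ioo, ← integral_of_le zero_le_one,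
    ← integral_add_adjacent_intervals
      (intervalIntegrable_mul_log_one_div_div_sq ha0 le_rfl ha0.le)
      (intervalIntegrable_mul_log_one_div_div_sq ha0 ha0.le zero_le_one)]
  have hlog : 0 ≤ log (1 / a) := log_nonneg (one_le_one_div ha0 ha1)
  linarith [integral_zero_to_self_mul_log_div_sq_le ha0 ha1,
    integral_self_to_one_mul_log_div_sq_le ha0 ha1]
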